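/- Let (r_t)_{t ∈ ℤ} be a stationary N-valued stochastic process and m(T) = P(r_1 ∉ {r_s : 1−T ≤ s ≤ 0}) the miss rate with window size T. Then m is nonincreasing: m(T+1) ≤ m(T) for all T ≥ 0. Consequently the average working-set size s(T) = E[w(0,T)] is concave in the discrete sense: its increments s(T+1) − s(T) are nonincreasing in T. -/

import Mathlib

open MeasureTheory

/-!
Shifting the window one step to the right adds exactly the next reference, so
`|W(t+1,T+1)| = |W(t,T)| + 1{r_{t+1} ∉ W(t,T)}`. Taking expectations and using stationarity to
replace `W(t+1,T+1)` by `W(t,T+1)` gives `s(T+1) - s(T) = m(T)`. Since working sets grow with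
the window, `m` is nonincreasing, and hence so are the increments of `s`.
-/

/-- The working set `W(t,T)` of a reference string: the set of distinct units
referenced in the window `[t-T+1, t]`. -/
noncomputable def workingSet {N : Type*} [DecidableEq N] (r : ℤ → N) (t : ℤ) (T : ℕ) : Finset N :=
  (Finset.Icc (t - T + 1) t).image r

lemma DependsOn.measurable_of_finite {ι N β : Type*} [MeasurableSpace N] [Countable N]
    [MeasurableSingletonClass N] [MeasurableSpace β] {f : (ι → N) → β} {s : Set ι}
    (hs : s.Finite) (hf : DependsOn f s) : Measurable f := by
  rcases isEmpty_or_nonempty β with hβ | hβ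
  · exact measurable_of_empty_codomain f
  obtain ⟨g, rfl⟩ := dependsOn_iff_exists_comp.mp hf
  have : Finite s := hs.to_subtype
  exact (measurable_of_countable g).comp (Set.measurable_restrict s)

lemma measurable_shift {N : Type*} [MeasurableSpace N] :
    Measurable fun (x : ℤ → N) t => x (t + 1) :=
  measurable_pi_lambda _ fun t => measurable_pi_apply (t + 1)

section WorkingSet

variable {N : Type*} [DecidableEq N]

lemma card_workingSet_le (x : ℤ → N) (t : ℤ) (T : ℕ) : (workingSet x t T).card ≤ T :=
  (Finset.card_image_le).trans (by simp)

lemma workingSet_subset_succ (x : ℤ → N) (t : ℤ) (T : ℕ) :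
    workingSet x t T ⊆ workingSet x t (T + 1) :=
  Finset.image_subset_image (Finset.Icc_subset_Icc (by push_cast; omega) le_rfl)

lemma workingSet_add_one_succ (x : ℤ → N) (t : ℤ) (T : ℕ) :
    workingSet x (t + 1) (T + 1) = insert (x (t + 1)) (workingSet x t T) := by
  rw [workingSet, workingSet, ← Finset.image_insert]
  congr 1
  ext u
  simp only [Finset.mem_Icc, Finset.mem_insert]
  omega

lemma workingSet_comp_add_one (x : ℤ → N) (t : ℤ) (T : ℕ) :
    workingSet (fun u => x (u + 1)) t T = workingSet x (t + 1) T := by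
  rw [workingSet, workingSet, ← Function.comp_def x, ← Finset.image_image,
    Finset.image_add_right_Icc]
  congr 2
  ring

lemma card_workingSet_add_one_succ (x : ℤ → N) (t : ℤ) (T : ℕ) :
    ((workingSet x (t + 1) (T + 1)).card : ℝ)
      = (workingSet x t T).card + {y | y (t + 1) ∉ workingSet y t T}.indicator 1 x := by
  rw [workingSet_add_one_succ]
  by_cases h : x (t + 1) ∈ workingSet x t T
  · simp [h]
  · simp [h, Finset.card_insert_of_notMem h]

lemma workingSet_congr {x y : ℤ → N} {t : ℤ} {T : ℕ}
    (hxy : ∀ u ∈ Set.Icc (t - T + 1) t, x u = y u) : workingSet x t T = workingSet y t T :=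
  Finset.image_congr fun u hu => hxy u (by simpa using hu)

variable [MeasurableSpace N] [Countable N] [MeasurableSingletonClass N]

lemma measurable_comp_workingSet {β : Type*} [MeasurableSpace β] (F : Finset N → β)
    (t : ℤ) (T : ℕ) : Measurable fun x : ℤ → N => F (workingSet x t T) :=
  DependsOn.measurable_of_finite (Set.finite_Icc _ _)
    fun _ _ hxy => congrArg F (workingSet_congr hxy)

lemma measurableSet_notMem_workingSet (t : ℤ) (T : ℕ) :
    MeasurableSet {x : ℤ → N | x (t + 1) ∉ workingSet x t T} := by
  refine measurableSet_setOfPred.mpr <|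
    DependsOn.measurable_of_finite (s := Set.Icc (t - T + 1) (t + 1)) (Set.finite_Icc _ _) ?_
  intro x y hxy
  dsimp only
  rw [workingSet_congr fun u hu => hxy u ⟨hu.1, hu.2.trans (by omega)⟩,
    hxy (t + 1) ⟨by omega, le_rfl⟩]

lemma integrable_card_workingSet (P : Measure (ℤ → N)) [IsFiniteMeasure P] (t : ℤ) (T : ℕ) :
    Integrable (fun x => ((workingSet x t T).card : ℝ)) P := by
  refine .of_bound (measurable_comp_workingSet (fun W => (W.card : ℝ)) t T).aestronglyMeasurable
    T (.of_forall fun x => ?_)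
  rw [Real.norm_natCast]
  exact_mod_cast card_workingSet_le x t T

lemma integral_comp_workingSet_add_one {P : Measure (ℤ → N)}
    (hP : P.map (fun x t => x (t + 1)) = P) (F : Finset N → ℝ) (t : ℤ) (T : ℕ) :
    ∫ x, F (workingSet x (t + 1) T) ∂P = ∫ x, F (workingSet x t T) ∂P := by
  simp_rw [← workingSet_comp_add_one]
  rw [← integral_map measurable_shift.aemeasurable
    (measurable_comp_workingSet F t T).aestronglyMeasurable, hP]

theorem integral_card_workingSet_succ {P : Measure (ℤ → N)} [IsFiniteMeasure P]
    (hP : P.map (fun x t => x (t + 1)) = P) (t : ℤ) (T : ℕ) :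
    ∫ x, ((workingSet x t (T + 1)).card : ℝ) ∂P
      = ∫ x, ((workingSet x t T).card : ℝ) ∂P
        + P.real {x | x (t + 1) ∉ workingSet x t T} := by
  rw [← integral_comp_workingSet_add_one hP (fun W => (W.card : ℝ)) t (T + 1)]
  have hmiss : MeasurableSet {x : ℤ → N | x (t + 1) ∉ workingSet x t T} :=
    measurableSet_notMem_workingSet t T
  have hind :
      Integrable ({x | x (t + 1) ∉ workingSet x t T}.indicator (1 : (ℤ → N) → ℝ)) P :=
    (integrable_const 1).indicator hmiss
  simp only [card_workingSet_add_one_succ]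
  rw [integral_add (integrable_card_workingSet P t T) hind, integral_indicator_one hmiss]

end WorkingSet

/-- For a stationary `N`-valued process, the miss rate
`m(T) = P(r 1 ∉ W(0,T))` is nonincreasing in `T`, and consequently the average
working-set size `s(T) = E[w(0,T)]` is discretely concave: its increments
`s(T+1) - s(T)` are nonincreasing in `T`. -/
theorem missRate_antitone_and_avg_workingSetSize_concave
    {Ω : Type*} [MeasurableSpace Ω] (μ : Measure Ω) [IsProbabilityMeasure μ]
    {N : Type*} [Fintype N] [DecidableEq N] [MeasurableSpace N] [MeasurableSingletonClass N]
    (r : ℤ → Ω → N) (hmeas : ∀ t, Measurable (r t))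
    (hstat : Measure.map (fun ω => fun t : ℤ => r (t + 1) ω) μ
           = Measure.map (fun ω => fun t : ℤ => r t ω) μ)
    (m s : ℕ → ℝ)
    (hm : ∀ T : ℕ, m T = (μ {ω | r 1 ω ∉ workingSet (fun u => r u ω) 0 T}).toReal)
    (hs : ∀ T : ℕ, s T = ∫ ω, ((workingSet (fun u => r u ω) 0 T).card : ℝ) ∂μ) :
    (∀ T : ℕ, m (T + 1) ≤ m T) ∧
    (∀ T : ℕ, s (T + 2) - s (T + 1) ≤ s (T + 1) - s T) := by
  set P := μ.map fun ω t => r t ω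
  have hpath : Measurable fun ω t => r t ω := measurable_pi_lambda _ hmeas
  have hP : P.map (fun x t => x (t + 1)) = P := by
    rw [Measure.map_map measurable_shift hpath]
    exact hstat
  have hmP (T : ℕ) : m T = P.real {x | x 1 ∉ workingSet x 0 T} := by
    have hmiss : MeasurableSet {x : ℤ → N | x 1 ∉ workingSet x 0 T} := by
      simpa using measurableSet_notMem_workingSet (N := N) 0 T
    rw [hm, measureReal_def, Measure.map_apply hpath hmiss]
    rfl
  have hsP (T : ℕ) : s T = ∫ x, ((workingSet x 0 T).card : ℝ) ∂P := by
    rw [hs, integral_map hpath.aemeasurable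
      (measurable_comp_workingSet (fun W => (W.card : ℝ)) 0 T).aestronglyMeasurable]
  have hincr (T : ℕ) : s (T + 1) - s T = m T := by
    rw [hsP, hsP, integral_card_workingSet_succ hP 0 T, hmP, zero_add]
    ring
  have hanti (T : ℕ) : m (T + 1) ≤ m T := by
    rw [hmP, hmP]
    exact measureReal_mono fun x hx hmem => hx (workingSet_subset_succ x 0 T hmem)
  exact ⟨hanti, fun T => by rw [hincr, hincr]; exact hanti T⟩
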